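/- arXiv:0911.3786 — 4 statements merged into one kernel-verified Lean document; each statement's English description precedes it below -/
import Mathlib

section
/- Let l : K → L be a function and m : L → G an injection of sets, so that G = L + L̄. For every set K̄ and every function l̄ : K̄ → L̄, the square with D = K + K̄, d : K → D the canonical inclusion, and l₁ = l + l̄ : D → G, is a pullback square (i.e., (l₁, d) is a pullback complement of (m, l)). -/
/-!
STATEMENT 1: pullback complements along an injection in `Set`.
Up to bijection, the injection `m : L → G` is the canonical inclusion
`Sum.inl : L → L ⊕ Lbar`.  For every set `Kbar` and function
`lbar : Kbar → Lbar`, the square with `D = K ⊕ Kbar`, `d = Sum.inl` and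
`l₁ = l + lbar = Sum.map l lbar` is a pullback square, i.e. `(l₁, d)` is a
pullback complement of `(m, l)`.
-/

universe u

theorem set_pullback_complement (K L Lbar : Type u) (l : K → L)
    (Kbar : Type u) (lbar : Kbar → Lbar) :
    ((Sum.inl ∘ l : K → L ⊕ Lbar) = Sum.map l lbar ∘ Sum.inl) ∧
    ∀ (K' : Type u) (l' : K' → L) (d' : K' → K ⊕ Kbar),
      Sum.inl ∘ l' = Sum.map l lbar ∘ d' →
      ∃! κ : K' → K, l ∘ κ = l' ∧ Sum.inl ∘ κ = d' := by
  refine ⟨rfl, fun K' l' d' h => ?_⟩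
  have hx : ∀ x : K', ∃ k : K, d' x = Sum.inl k := by
    intro x
    have := congrFun h x
    cases hd : d' x with
    | inl k => exact ⟨k, rfl⟩
    | inr k =>
      simp only [Function.comp_apply, hd, Sum.map, Sum.elim_inr] at this
      exact absurd this (by simp)
  choose κ hκ using hx
  refine ⟨κ, ⟨?_, ?_⟩, ?_⟩
  · funext x
    have := congrFun h x
    simp only [Function.comp_apply, hκ x, Sum.map, Sum.elim_inl, Sum.inl.injEq] at this
    exact this.symm
  · funext x; exact (hκ x).symm
  · rintro g ⟨hg1, hg2⟩
    funext x
    have := congrFun hg2 x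
    simp only [Function.comp_apply, hκ x] at this
    exact Sum.inl_injective this
end

section
/- Let l : K → L be a function and m : L → G an injection of sets, so that G = L + L̄. Then every pullback complement of (m, l) is, up to isomorphism, of the form D = K + K̄ with d the canonical inclusion and l₁ = l + l̄ for some set K̄ and function l̄ : K̄ → L̄. -/
/-!
STATEMENT 2: every pullback complement of `(m, l)` in `Set`, where
`m = Sum.inl : L → L ⊕ Lbar` is (up to bijection) the canonical inclusion,
is itself of the canonical form `D = K ⊕ Kbar`, `d = Sum.inl`,
`l₁ = l + lbar` for some set `Kbar` and some function `lbar : Kbar → Lbar`,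
up to isomorphism.
-/

universe u

theorem set_pullback_complement_classification (K L Lbar : Type u) (l : K → L)
    (D' : Type u) (d' : K → D') (l₁' : D' → L ⊕ Lbar)
    (hcomm : Sum.inl ∘ l = l₁' ∘ d')
    (hpb : ∀ (K' : Type u) (l' : K' → L) (d'' : K' → D'),
      Sum.inl ∘ l' = l₁' ∘ d'' → ∃! κ : K' → K, l ∘ κ = l' ∧ d' ∘ κ = d'') :
    ∃ (Kbar : Type u) (lbar : Kbar → Lbar) (φ : D' ≃ (K ⊕ Kbar)),
      (⇑φ ∘ d' = Sum.inl) ∧ (Sum.map l lbar ∘ ⇑φ = l₁') := by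
  have hcomm' : ∀ k, l₁' (d' k) = Sum.inl (l k) := fun k =>
    (congrFun hcomm k).symm
  -- d' is injective (pullback of the mono Sum.inl)
  have hd'inj : Function.Injective d' := by
    intro k1 k2 h
    have hl : l k1 = l k2 := by
      have := (hcomm' k1).symm.trans (h ▸ hcomm' k2)
      exact Sum.inl_injective this
    have hc : Sum.inl ∘ (fun _ : PUnit.{u+1} => l k1) =
        l₁' ∘ (fun _ : PUnit.{u+1} => d' k1) := by
      funext _; exact (hcomm' k1).symm
    obtain ⟨κ, _, huniq⟩ := hpb PUnit.{u+1} (fun _ => l k1) (fun _ => d' k1) hc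
    have h1 := huniq (fun _ => k1) ⟨rfl, rfl⟩
    have h2 := huniq (fun _ => k2) ⟨by funext _; exact hl.symm, by funext _; exact h.symm⟩
    have := h1.trans h2.symm
    exact congrFun this PUnit.unit
  -- every element of D' mapping to the left summand is in the image of d'
  have hsurj : ∀ (x : D') (a : L), l₁' x = Sum.inl a → ∃ k, l k = a ∧ d' k = x := by
    intro x a hx
    have hc : Sum.inl ∘ (fun _ : PUnit.{u+1} => a) =
        l₁' ∘ (fun _ : PUnit.{u+1} => x) := by funext _; exact hx.symm
    obtain ⟨κ, ⟨hκ1, hκ2⟩, _⟩ := hpb PUnit.{u+1} (fun _ => a) (fun _ => x) hc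
    exact ⟨κ PUnit.unit, congrFun hκ1 PUnit.unit, congrFun hκ2 PUnit.unit⟩
  refine ⟨{x : D' // (l₁' x).isRight}, fun x => (l₁' x.1).getRight x.2, ?_⟩
  let ψ : K ⊕ {x : D' // (l₁' x).isRight} → D' := Sum.elim d' Subtype.val
  have hψbij : Function.Bijective ψ := by
    constructor
    · rintro (k1 | ⟨x1, h1⟩) (k2 | ⟨x2, h2⟩) h
      · exact congrArg Sum.inl (hd'inj h)
      · exfalso; simp only [ψ, Sum.elim_inl, Sum.elim_inr] at h
        rw [← h, hcomm' k1] at h2; simp at h2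
      · exfalso; simp only [ψ, Sum.elim_inl, Sum.elim_inr] at h
        rw [h, hcomm' k2] at h1; simp at h1
      · simp only [ψ, Sum.elim_inr] at h
        exact congrArg Sum.inr (Subtype.ext h)
    · intro x
      rcases hx : l₁' x with a | b
      · obtain ⟨k, _, hk⟩ := hsurj x a hx
        exact ⟨Sum.inl k, hk⟩
      · exact ⟨Sum.inr ⟨x, by rw [hx]; rfl⟩, rfl⟩
  let φ := (Equiv.ofBijective ψ hψbij).symm
  refine ⟨φ, ?_, ?_⟩
  · funext k
    show (Equiv.ofBijective ψ hψbij).symm ((Equiv.ofBijective ψ hψbij) (Sum.inl k)) = Sum.inl k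
    exact (Equiv.ofBijective ψ hψbij).symm_apply_apply _
  · funext x
    obtain ⟨y, rfl⟩ := hψbij.2 x
    have hφ : φ (ψ y) = y := by
      simp only [φ] at *; exact (Equiv.ofBijective ψ hψbij).symm_apply_apply y
    simp only [Function.comp_apply, hφ]
    rcases y with k | ⟨x, hx⟩
    · simpa [ψ] using (hcomm' k).symm
    · simp only [ψ, Sum.map_inr, Sum.elim_inr]
      exact Sum.inr_getRight _ hx
end

section
/- Let l : K → L be a function and m : L → G an injection of sets, G = L + L̄. Then the final pullback complement (pushback) of (m, l) exists and is given by D = K + L̄, d : K → D the canonical inclusion, and l₁ = l + id_{L̄} : D → G. -/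
/-!
STATEMENT 3: the final pullback complement (pushback) of `(m, l)` in `Set`,
with `m = Sum.inl : L → L ⊕ Lbar` the canonical inclusion (up to bijection),
exists and is given by `D = K ⊕ Lbar`, `d = Sum.inl`, `l₁ = l + id`.
It is a pullback complement, and it is terminal among all pullback
complements of `(m, l)`.
-/

universe u

/-- Auxiliary: lift a case distinction on `l₁' x` to a map `D' → K ⊕ Lbar`. -/
def sumLift {L Lbar D' K : Type u} (l₁' : D' → L ⊕ Lbar)
    (f : ∀ x a, l₁' x = Sum.inl a → K) (x : D') : K ⊕ Lbar :=
  match h : l₁' x with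
  | Sum.inl a => Sum.inl (f x a h)
  | Sum.inr b => Sum.inr b

theorem sumLift_inl {L Lbar D' K : Type u} (l₁' : D' → L ⊕ Lbar)
    (f : ∀ x a, l₁' x = Sum.inl a → K) (x : D') (a : L) (h : l₁' x = Sum.inl a) :
    sumLift l₁' f x = Sum.inl (f x a h) := by
  unfold sumLift
  split
  · next a' h' =>
      obtain rfl : a' = a := Sum.inl.inj (h'.symm.trans h)
      rfl
  · next b h' => exact absurd (h'.symm.trans h) (by simp)

theorem sumLift_inr {L Lbar D' K : Type u} (l₁' : D' → L ⊕ Lbar)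
    (f : ∀ x a, l₁' x = Sum.inl a → K) (x : D') (b : Lbar) (h : l₁' x = Sum.inr b) :
    sumLift l₁' f x = Sum.inr b := by
  unfold sumLift
  split
  · next a' h' => exact absurd (h'.symm.trans h) (by simp)
  · next b' h' =>
      obtain rfl : b' = b := Sum.inr.inj (h'.symm.trans h)
      rfl

theorem set_final_pullback_complement (K L Lbar : Type u) (l : K → L) :
    -- the square is a pullback complement of (m, l):
    (((Sum.inl ∘ l : K → L ⊕ Lbar) = Sum.map l (id : Lbar → Lbar) ∘ Sum.inl) ∧
      ∀ (K' : Type u) (l' : K' → L) (d'' : K' → K ⊕ Lbar),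
        Sum.inl ∘ l' = Sum.map l (id : Lbar → Lbar) ∘ d'' →
        ∃! κ : K' → K, l ∘ κ = l' ∧ Sum.inl ∘ κ = d'') ∧
    -- and it is final among all pullback complements of (m, l):
    ∀ (D' : Type u) (d' : K → D') (l₁' : D' → L ⊕ Lbar),
      (Sum.inl ∘ l = l₁' ∘ d') →
      (∀ (K' : Type u) (l' : K' → L) (d'' : K' → D'),
        Sum.inl ∘ l' = l₁' ∘ d'' → ∃! κ : K' → K, l ∘ κ = l' ∧ d' ∘ κ = d'') →
      ∃! δ : D' → K ⊕ Lbar,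
        δ ∘ d' = Sum.inl ∧ Sum.map l (id : Lbar → Lbar) ∘ δ = l₁' := by
  refine ⟨⟨rfl, ?_⟩, ?_⟩
  · -- the square is a pullback
    intro K' l' d'' h
    have hx : ∀ y, ∃ k, d'' y = Sum.inl k ∧ l k = l' y := by
      intro y
      have hy := congrFun h y
      simp only [Function.comp_apply] at hy
      cases hd : d'' y with
      | inl k =>
          rw [hd] at hy
          exact ⟨k, rfl, (Sum.inl.inj hy).symm⟩
      | inr b =>
          rw [hd] at hy
          simp at hy
    choose κ hκ1 hκ2 using hx
    refine ⟨κ, ⟨funext fun y => hκ2 y, funext fun y => (hκ1 y).symm⟩, ?_⟩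
    rintro κ' ⟨h1, h2⟩
    funext y
    have := (congrFun h2 y).trans (hκ1 y)
    exact Sum.inl.inj this
  · -- finality
    intro D' d' l₁' hcomm huniv
    -- d' is injective
    have hd'inj : Function.Injective d' := by
      intro x y hxy
      have hl : l x = l y := by
        have hx := congrFun hcomm x
        have hy := congrFun hcomm y
        simp only [Function.comp_apply] at hx hy
        rw [hxy] at hx
        exact Sum.inl.inj (hx.trans hy.symm)
      obtain ⟨κ, _, huniq⟩ := huniv PUnit.{u+1} (fun _ => l x) (fun _ => d' x)
        (funext fun _ => congrFun hcomm x)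
      have h1 := huniq (fun _ => x) ⟨rfl, rfl⟩
      have h2 := huniq (fun _ => y) ⟨funext fun _ => hl.symm, funext fun _ => hxy.symm⟩
      exact congrFun (h1.trans h2.symm) PUnit.unit
    -- the pullback of inl and l₁'
    obtain ⟨κ, ⟨hκl, hκd⟩, hκuniq⟩ := huniv {p : L × D' // Sum.inl p.1 = l₁' p.2}
      (fun p => p.1.1) (fun p => p.1.2) (funext fun p => p.2)
    refine ⟨sumLift l₁' (fun x a h => κ ⟨(a, x), h.symm⟩), ⟨?_, ?_⟩, ?_⟩
    · funext k
      have h : l₁' (d' k) = Sum.inl (l k) := (congrFun hcomm k).symm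
      have := sumLift_inl l₁' (fun x a h => κ ⟨(a, x), h.symm⟩) (d' k) (l k) h
      simp only [Function.comp_apply, this]
      congr 1
      exact hd'inj (congrFun hκd ⟨(l k, d' k), h.symm⟩)
    · funext x
      cases hx : l₁' x with
      | inl a =>
          have := sumLift_inl l₁' (fun x a h => κ ⟨(a, x), h.symm⟩) x a hx
          simp only [Function.comp_apply, this, Sum.map_inl]
          exact congrArg Sum.inl (congrFun hκl ⟨(a, x), hx.symm⟩)
      | inr b =>
          have := sumLift_inr l₁' (fun x a h => κ ⟨(a, x), h.symm⟩) x b hx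
          simp only [Function.comp_apply, this, Sum.map_inr, id_eq]
    · rintro δ' ⟨h1, h2⟩
      funext x
      cases hx : l₁' x with
      | inl a =>
          have hxeq : d' (κ ⟨(a, x), hx.symm⟩) = x := congrFun hκd ⟨(a, x), hx.symm⟩
          have : δ' x = Sum.inl (κ ⟨(a, x), hx.symm⟩) := by
            have h := congrFun h1 (κ ⟨(a, x), hx.symm⟩)
            rw [Function.comp_apply, hxeq] at h
            exact h
          rw [this, sumLift_inl l₁' (fun x a h => κ ⟨(a, x), h.symm⟩) x a hx]
      | inr b =>
          have hmap := congrFun h2 x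
          simp only [Function.comp_apply, hx] at hmap
          rw [sumLift_inr l₁' (fun x a h => κ ⟨(a, x), h.symm⟩) x b hx]
          cases hδ : δ' x with
          | inl k => rw [hδ] at hmap; simp at hmap
          | inr b' => rw [hδ] at hmap; simpa using hmap
end

section
/- Let r : K → R be a graph morphism and d : K → D a graph monomorphism, with D = (K + K̄) +ₑ K̃ (K̄ the full subgraph on nodes outside d(K), K̃ the linking edges). Define H as the graph with nodes R_N + K̄_N and edges R_E + K̄_E + R̃, where R̃ has one edge (e, n_K, p_K) : r₁(n_K) → r₁(p_K) for each linking edge e : n_K → p_K in K̃, with r₁ = r + id_{K̄} on nodes. Then the square with h : R → H the canonical inclusion and r₁ = (r + id_{K̄}) +ₑ r̃ is a pushout of d and r in the category of graphs. -/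
universe u

structure Grph : Type (u + 1) where
  N : Type u
  E : Type u
  src : E → N
  tgt : E → N

@[ext]
structure GraphHom (X Y : Grph.{u}) where
  fN : X.N → Y.N
  fE : X.E → Y.E
  hsrc : ∀ e, Y.src (fE e) = fN (X.src e)
  htgt : ∀ e, Y.tgt (fE e) = fN (X.tgt e)

def GraphHom.id (X : Grph.{u}) : GraphHom X X :=
  ⟨_root_.id, _root_.id, fun _ => rfl, fun _ => rfl⟩

/-- `g.comp f` is the composite `g ∘ f`. -/
def GraphHom.comp {X Y Z : Grph.{u}} (g : GraphHom Y Z) (f : GraphHom X Y) :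
    GraphHom X Z :=
  ⟨g.fN ∘ f.fN, g.fE ∘ f.fE,
    fun e => by simp [Function.comp, g.hsrc, f.hsrc],
    fun e => by simp [Function.comp, g.htgt, f.htgt]⟩

section
/- Decomposition data: `D = (K + Kbar) +ₑ Kt`, with `Kt` the linking edges,
   given by their source/target functions into the nodes of `K + Kbar`. -/
variable (K R Kbar : Grph.{u}) (r : GraphHom K R)
variable (Kt : Type u) (ks kt : Kt → K.N ⊕ Kbar.N)

/-- The graph `D = (K + Kbar) +ₑ Kt`. -/
def Dgr : Grph.{u} where
  N := K.N ⊕ Kbar.N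
  E := K.E ⊕ Kbar.E ⊕ Kt
  src := Sum.elim (Sum.inl ∘ K.src) (Sum.elim (Sum.inr ∘ Kbar.src) ks)
  tgt := Sum.elim (Sum.inl ∘ K.tgt) (Sum.elim (Sum.inr ∘ Kbar.tgt) kt)

/-- The canonical inclusion (a monomorphism) `d : K → D`. -/
def dmor : GraphHom K (Dgr K Kbar Kt ks kt) :=
  ⟨Sum.inl, Sum.inl, fun _ => rfl, fun _ => rfl⟩

/-- The graph `H = (R + Kbar) +ₑ Rt`, where `Rt ≅ Kt` consists of one edge
`(e, n_K, p_K) : r₁ n_K → r₁ p_K` for each linking edge `e : n_K → p_K` in `Kt`. -/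
def Hgr : Grph.{u} where
  N := R.N ⊕ Kbar.N
  E := R.E ⊕ Kbar.E ⊕ Kt
  src := Sum.elim (Sum.inl ∘ R.src)
    (Sum.elim (Sum.inr ∘ Kbar.src) (Sum.map r.fN _root_.id ∘ ks))
  tgt := Sum.elim (Sum.inl ∘ R.tgt)
    (Sum.elim (Sum.inr ∘ Kbar.tgt) (Sum.map r.fN _root_.id ∘ kt))

/-- The canonical inclusion `h : R → H`. -/
def hmor : GraphHom R (Hgr K R Kbar r Kt ks kt) :=
  ⟨Sum.inl, Sum.inl, fun _ => rfl, fun _ => rfl⟩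

/-- The morphism `r₁ = (r + id) +ₑ r̃ : D → H`. -/
def r1mor : GraphHom (Dgr K Kbar Kt ks kt) (Hgr K R Kbar r Kt ks kt) where
  fN := Sum.map r.fN _root_.id
  fE := Sum.map r.fE _root_.id
  hsrc := by rintro (e | e | e) <;> simp [Dgr, Hgr, r.hsrc]
  htgt := by rintro (e | e | e) <;> simp [Dgr, Hgr, r.htgt]

end

/-!
The nodes and edges of `H` are those of `R` together with those of `D` outside `K`, so a
morphism out of `H` is fixed by its composites with `h` and `r₁`, and a cocone `(h', r₁')`
prescribes it: `h'` on `R`, `r₁'` elsewhere. The only thing to check is that linking edges keep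
their endpoints, whose `K`-ends `H` relocates along `r`; this is where `h' ∘ r = r₁' ∘ d` enters.
-/

section Pushout

variable {K R Kbar H' : Grph.{u}} {r : GraphHom K R} {Kt : Type u} {ks kt : Kt → K.N ⊕ Kbar.N}

lemma hmor_comp_eq_r1mor_comp_dmor :
    (hmor K R Kbar r Kt ks kt).comp r =
      (r1mor K R Kbar r Kt ks kt).comp (dmor K Kbar Kt ks kt) :=
  rfl

lemma Hgr.hom_ext {η₁ η₂ : GraphHom (Hgr K R Kbar r Kt ks kt) H'}
    (hh : η₁.comp (hmor K R Kbar r Kt ks kt) = η₂.comp (hmor K R Kbar r Kt ks kt))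
    (hr : η₁.comp (r1mor K R Kbar r Kt ks kt) = η₂.comp (r1mor K R Kbar r Kt ks kt)) :
    η₁ = η₂ := by
  have hhN := congrArg GraphHom.fN hh
  have hhE := congrArg GraphHom.fE hh
  have hrN := congrArg GraphHom.fN hr
  have hrE := congrArg GraphHom.fE hr
  ext x
  · rcases x with n | n
    · exact congrFun hhN n
    · exact congrFun hrN (.inr n)
  · rcases x with e | e
    · exact congrFun hhE e
    · exact congrFun hrE (.inr e)

variable (h' : GraphHom R H') (r₁' : GraphHom (Dgr K Kbar Kt ks kt) H')

lemma elim_comp_r1mor_fN (hN : h'.fN ∘ r.fN = r₁'.fN ∘ Sum.inl) :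
    Sum.elim h'.fN (r₁'.fN ∘ Sum.inr) ∘ (r1mor K R Kbar r Kt ks kt).fN = r₁'.fN := by
  change Sum.elim h'.fN (r₁'.fN ∘ Sum.inr) ∘ Sum.map r.fN _root_.id = r₁'.fN
  rw [Sum.elim_comp_map, hN, Function.comp_id]
  exact Sum.elim_comp_inl_inr _

lemma elim_comp_r1mor_fE (hE : h'.fE ∘ r.fE = r₁'.fE ∘ Sum.inl) :
    Sum.elim h'.fE (r₁'.fE ∘ Sum.inr) ∘ (r1mor K R Kbar r Kt ks kt).fE = r₁'.fE := by
  change Sum.elim h'.fE (r₁'.fE ∘ Sum.inr) ∘ Sum.map r.fE _root_.id = r₁'.fE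
  rw [Sum.elim_comp_map, hE, Function.comp_id]
  exact Sum.elim_comp_inl_inr _

def pushoutDesc (hcomm : h'.comp r = r₁'.comp (dmor K Kbar Kt ks kt)) :
    GraphHom (Hgr K R Kbar r Kt ks kt) H' where
  fN := Sum.elim h'.fN (r₁'.fN ∘ Sum.inr)
  fE := Sum.elim h'.fE (r₁'.fE ∘ Sum.inr)
  hsrc := by
    rintro (e | e | e)
    · exact h'.hsrc e
    · exact r₁'.hsrc (.inr (.inl e))
    · exact (r₁'.hsrc (.inr (.inr e))).trans
        (congrFun (elim_comp_r1mor_fN h' r₁' (congrArg GraphHom.fN hcomm)) (ks e)).symm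
  htgt := by
    rintro (e | e | e)
    · exact h'.htgt e
    · exact r₁'.htgt (.inr (.inl e))
    · exact (r₁'.htgt (.inr (.inr e))).trans
        (congrFun (elim_comp_r1mor_fN h' r₁' (congrArg GraphHom.fN hcomm)) (kt e)).symm

variable (hcomm : h'.comp r = r₁'.comp (dmor K Kbar Kt ks kt))

lemma pushoutDesc_comp_hmor :
    (pushoutDesc h' r₁' hcomm).comp (hmor K R Kbar r Kt ks kt) = h' :=
  rfl

lemma pushoutDesc_comp_r1mor :
    (pushoutDesc h' r₁' hcomm).comp (r1mor K R Kbar r Kt ks kt) = r₁' :=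
  GraphHom.ext (elim_comp_r1mor_fN h' r₁' (congrArg GraphHom.fN hcomm))
    (elim_comp_r1mor_fE h' r₁' (congrArg GraphHom.fE hcomm))

end Pushout

theorem graph_pushout_along_mono (K R Kbar : Grph.{u}) (r : GraphHom K R)
    (Kt : Type u) (ks kt : Kt → K.N ⊕ Kbar.N) :
    ((hmor K R Kbar r Kt ks kt).comp r =
      (r1mor K R Kbar r Kt ks kt).comp (dmor K Kbar Kt ks kt)) ∧
    ∀ (H' : Grph.{u}) (h' : GraphHom R H')
      (r₁' : GraphHom (Dgr K Kbar Kt ks kt) H'),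
      h'.comp r = r₁'.comp (dmor K Kbar Kt ks kt) →
      ∃! η : GraphHom (Hgr K R Kbar r Kt ks kt) H',
        η.comp (hmor K R Kbar r Kt ks kt) = h' ∧
        η.comp (r1mor K R Kbar r Kt ks kt) = r₁' := by
  refine ⟨hmor_comp_eq_r1mor_comp_dmor, fun H' h' r₁' hcomm => ?_⟩
  refine ⟨pushoutDesc h' r₁' hcomm,
    ⟨pushoutDesc_comp_hmor h' r₁' hcomm, pushoutDesc_comp_r1mor h' r₁' hcomm⟩, ?_⟩
  rintro η ⟨hηh, hηr⟩
  exact Hgr.hom_ext (hηh.trans (pushoutDesc_comp_hmor h' r₁' hcomm).symm)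
    (hηr.trans (pushoutDesc_comp_r1mor h' r₁' hcomm).symm)
end
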